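/- Let g: (−r, r) → ℝ be odd and strictly increasing with g(0) = 0, and for x ∈ ℝ³ with ‖x‖ < r define y(x) = g(‖x‖) x/‖x‖ (with y(0) = 0). If ‖x_j‖ ≤ ‖x_i‖ for all j in a finite index set N, and a_ij ≥ 0, then ⟨x_i, Σ_{j∈N} a_ij (y(x_j) − y(x_i))⟩ ≤ 0, with equality if and only if a_ij (x_j − x_i) = 0 for all j ∈ N. -/

import Mathlib

/-! By Cauchy–Schwarz and monotonicity of `g` on `[0, r)`,
`⟪x_i, y(x_j)⟫ ≤ ‖x_i‖ g(‖x_j‖) ≤ ‖x_i‖ g(‖x_i‖) = ⟪x_i, y(x_i)⟫` whenever `‖x_j‖ ≤ ‖x_i‖`,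
so every summand is nonpositive. Equality in the second step forces `‖x_j‖ = ‖x_i‖` by strict
monotonicity, and then equality in Cauchy–Schwarz forces `x_j = x_i`. -/

open Finset
open scoped RealInnerProductSpace

theorem StrictMonoOn.nonneg_of_map_zero {g : ℝ → ℝ} {r s : ℝ}
    (hg : StrictMonoOn g (Set.Ico 0 r)) (hg0 : g 0 = 0) (hs : s ∈ Set.Ico 0 r) : 0 ≤ g s :=
  hg0 ▸ hg.monotoneOn ⟨le_rfl, hs.1.trans_lt hs.2⟩ hs hs.1

section RadialMap

variable {E : Type*} [NormedAddCommGroup E] [InnerProductSpace ℝ E]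

/-- At `x = 0` the junk value `g 0 / 0 = 0` makes this `0`, whatever `g 0` is. -/
noncomputable def radialMap (g : ℝ → ℝ) (x : E) : E := (g ‖x‖ / ‖x‖) • x

theorem eq_radialMap_of_forall_ne_zero {g : ℝ → ℝ} {y : E → E}
    (hy : ∀ x, x ≠ 0 → y x = (g ‖x‖ / ‖x‖) • x) (hy0 : y 0 = 0) : y = radialMap g := by
  funext x
  by_cases hx : x = 0
  · simp [hx, hy0, radialMap]
  · exact hy x hx

theorem inner_radialMap_self (g : ℝ → ℝ) (x : E) : ⟪x, radialMap g x⟫ = ‖x‖ * g ‖x‖ := by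
  rw [radialMap, real_inner_smul_right, real_inner_self_eq_norm_mul_norm]
  rcases eq_or_ne ‖x‖ 0 with hx | hx
  · simp [hx]
  · field_simp

theorem inner_radialMap_le (g : ℝ → ℝ) (x z : E) (hz : 0 ≤ g ‖z‖) :
    ⟪x, radialMap g z⟫ ≤ ‖x‖ * g ‖z‖ := by
  rw [radialMap, real_inner_smul_right]
  rcases eq_or_ne ‖z‖ 0 with hz0 | hz0
  · simpa [hz0] using mul_nonneg (norm_nonneg x) hz
  · calc g ‖z‖ / ‖z‖ * ⟪x, z⟫ ≤ g ‖z‖ / ‖z‖ * (‖x‖ * ‖z‖) := by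
          gcongr
          exact real_inner_le_norm x z
      _ = ‖x‖ * g ‖z‖ := by field_simp

theorem eq_of_norm_eq_of_inner_eq_norm_mul {x z : E} (hn : ‖z‖ = ‖x‖)
    (h : ⟪x, z⟫ = ‖x‖ * ‖z‖) : z = x := by
  have : ‖x - z‖ ^ 2 = 0 := by rw [norm_sub_sq_real, h, hn]; ring
  exact (sub_eq_zero.mp (norm_eq_zero.mp (pow_eq_zero_iff two_ne_zero |>.mp this))).symm

theorem inner_radialMap_le_inner_radialMap_self {g : ℝ → ℝ} {r : ℝ}
    (hg : StrictMonoOn g (Set.Ico 0 r)) (hg0 : g 0 = 0) {x z : E}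
    (hx : ‖x‖ < r) (hzx : ‖z‖ ≤ ‖x‖) :
    ⟪x, radialMap g z⟫ ≤ ⟪x, radialMap g x⟫ := by
  have hz : ‖z‖ ∈ Set.Ico 0 r := ⟨norm_nonneg z, hzx.trans_lt hx⟩
  calc ⟪x, radialMap g z⟫ ≤ ‖x‖ * g ‖z‖ :=
        inner_radialMap_le g x z (hg.nonneg_of_map_zero hg0 hz)
    _ ≤ ‖x‖ * g ‖x‖ := by
        gcongr
        exact hg.monotoneOn hz ⟨norm_nonneg x, hx⟩ hzx
    _ = ⟪x, radialMap g x⟫ := (inner_radialMap_self g x).symm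

theorem inner_radialMap_eq_inner_radialMap_self_iff {g : ℝ → ℝ} {r : ℝ}
    (hg : StrictMonoOn g (Set.Ico 0 r)) (hg0 : g 0 = 0) {x z : E}
    (hx : ‖x‖ < r) (hzx : ‖z‖ ≤ ‖x‖) :
    ⟪x, radialMap g z⟫ = ⟪x, radialMap g x⟫ ↔ z = x := by
  refine ⟨fun h ↦ ?_, fun h ↦ h ▸ rfl⟩
  rcases (norm_nonneg x).eq_or_lt with hx0 | hx0
  · rw [norm_le_zero_iff.mp (hzx.trans hx0.ge), norm_eq_zero.mp hx0.symm]
  have hxr : ‖x‖ ∈ Set.Ico 0 r := ⟨norm_nonneg x, hx⟩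
  have hzr : ‖z‖ ∈ Set.Ico 0 r := ⟨norm_nonneg z, hzx.trans_lt hx⟩
  have hgz := hg.nonneg_of_map_zero hg0 hzr
  have hgzx : g ‖z‖ ≤ g ‖x‖ := hg.monotoneOn hzr hxr hzx
  rw [inner_radialMap_self] at h
  have hnorm : ‖z‖ = ‖x‖ := by
    refine hg.injOn hzr hxr (le_antisymm hgzx (le_of_mul_le_mul_left ?_ hx0))
    exact h ▸ inner_radialMap_le g x z hgz
  have hgpos : 0 < g ‖z‖ := hg0 ▸ hg ⟨le_rfl, hx0.trans hx⟩ hzr (hnorm ▸ hx0)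
  refine eq_of_norm_eq_of_inner_eq_norm_mul hnorm ?_
  rw [radialMap, real_inner_smul_right, hnorm] at h
  apply mul_left_cancel₀ (div_pos (hnorm ▸ hgpos) hx0).ne'
  rw [h, hnorm]
  field_simp

end RadialMap

theorem lyapunov_inequality_general (r : ℝ) (g : ℝ → ℝ)
    (hg0 : g 0 = 0)
    (hmono : StrictMonoOn g (Set.Ioo (-r) r))
    (y : EuclideanSpace ℝ (Fin 3) → EuclideanSpace ℝ (Fin 3))
    (hy : ∀ x, x ≠ 0 → y x = (g ‖x‖ / ‖x‖) • x) (hy0 : y 0 = 0)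
    {ι : Type*} (N : Finset ι) (x : ι → EuclideanSpace ℝ (Fin 3)) (a : ι → ℝ)
    (ha : ∀ j, 0 ≤ a j) (i : ι)
    (hxi : ‖x i‖ < r) (hle : ∀ j ∈ N, ‖x j‖ ≤ ‖x i‖) :
    (inner ℝ (x i) (∑ j ∈ N, a j • (y (x j) - y (x i))) : ℝ) ≤ 0 ∧
    ((inner ℝ (x i) (∑ j ∈ N, a j • (y (x j) - y (x i))) : ℝ) = 0 ↔
      ∀ j ∈ N, a j • (x j - x i) = 0) := by
  have hg : StrictMonoOn g (Set.Ico 0 r) :=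
    hmono.mono fun s hs ↦ ⟨by linarith [hs.1, hs.2], hs.2⟩
  obtain rfl := eq_radialMap_of_forall_ne_zero hy hy0
  have hsum : ⟪x i, ∑ j ∈ N, a j • (radialMap g (x j) - radialMap g (x i))⟫ =
      ∑ j ∈ N, a j * (⟪x i, radialMap g (x j)⟫ - ⟪x i, radialMap g (x i)⟫) := by
    simp only [inner_sum, real_inner_smul_right, inner_sub_right]
  have hterm : ∀ j ∈ N, a j * (⟪x i, radialMap g (x j)⟫ - ⟪x i, radialMap g (x i)⟫) ≤ 0 :=
    fun j hj ↦ mul_nonpos_of_nonneg_of_nonpos (ha j) <| sub_nonpos.mpr <|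
      inner_radialMap_le_inner_radialMap_self hg hg0 hxi (hle j hj)
  rw [hsum, sum_eq_zero_iff_of_nonpos hterm]
  refine ⟨sum_nonpos hterm, forall₂_congr fun j hj ↦ ?_⟩
  rw [mul_eq_zero, smul_eq_zero, sub_eq_zero, sub_eq_zero,
    inner_radialMap_eq_inner_radialMap_self_iff hg hg0 hxi (hle j hj)]

/-- The Lyapunov inequality for the rotation consensus law: with
`y(x) = g(‖x‖) x/‖x‖` for odd, strictly increasing `g` with `g(0)=0`, if
`‖x_j‖ ≤ ‖x_i‖` for all `j ∈ N` and `a_ij ≥ 0`, then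
`⟨x_i, Σ_{j∈N} a_ij (y(x_j) − y(x_i))⟩ ≤ 0`, with equality iff
`a_ij (x_j − x_i) = 0` for all `j ∈ N`. -/
theorem lyapunov_inequality (r : ℝ) (hr : 0 < r) (g : ℝ → ℝ)
    (hodd : ∀ s, g (-s) = -g s) (hg0 : g 0 = 0)
    (hmono : StrictMonoOn g (Set.Ioo (-r) r))
    (y : EuclideanSpace ℝ (Fin 3) → EuclideanSpace ℝ (Fin 3))
    (hy : ∀ x, x ≠ 0 → y x = (g ‖x‖ / ‖x‖) • x) (hy0 : y 0 = 0)
    {ι : Type*} (N : Finset ι) (x : ι → EuclideanSpace ℝ (Fin 3)) (a : ι → ℝ)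
    (ha : ∀ j, 0 ≤ a j) (i : ι)
    (hxi : ‖x i‖ < r) (hle : ∀ j ∈ N, ‖x j‖ ≤ ‖x i‖) :
    (inner ℝ (x i) (∑ j ∈ N, a j • (y (x j) - y (x i))) : ℝ) ≤ 0 ∧
    ((inner ℝ (x i) (∑ j ∈ N, a j • (y (x j) - y (x i))) : ℝ) = 0 ↔
      ∀ j ∈ N, a j • (x j - x i) = 0) :=
  lyapunov_inequality_general r g hg0 hmono y hy hy0 N x a ha i hxi hle
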